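/- arXiv:math/0502233 — 4 statements merged into one kernel-verified Lean document; each statement's English description precedes it below -/
import Mathlib

section
/- Let X be a compact metrizable abelian topological group with a translation-invariant metric d inducing its topology and normalized Haar probability measure μ, and let a group Γ act on X by continuous group automorphisms. Let F ⊆ Γ be finite, δ > 0, and set d_F(x,y) = max_{γ∈F} d(γ⁻¹x, γ⁻¹y). If P is a finite partition of X into measurable sets each of d-diameter < δ, and E ⊆ X satisfies d_F(x,y) ≥ 2δ for all x ≠ y in E, then log |E| ≤ H(P^F) := −Σ_{A∈P^F} μ(A) log μ(A). -/
/-!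
Every cell `A` of `P^F` has `d_F`-diameter `< δ`, and since `d` is translation invariant and
`Γ` acts by additive maps, `d_F(x, y)` only depends on `x - y`. So no two distinct points of the
`2δ`-separated set `E` differ by `u - v` with `u, v ∈ A`: each cell contains at most one point
of `E` (hence `E` is finite), and the translates `x + A`, `x ∈ E`, are pairwise disjoint, so
`|E| μ(A) ≤ 1` by invariance of Haar measure. Hence `log |E| = ∑ μ(A) log |E| ≤ H(P^F)`.
-/

open MeasureTheory
open scoped ENNReal Pointwise

/-- The common refinement `P^F = ⋁_{γ∈F} γP` of the translates of a finite partition `P`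
of `X` by the elements of a finite set `F ⊆ Γ`: its elements are the nonempty
intersections `⋂_{γ∈F} γ•A_γ` with `A_γ ∈ P`. -/
noncomputable def refinePartition {Γ X : Type*} [Group Γ] [AddCommGroup X]
    [DistribMulAction Γ X] (F : Finset Γ) (P : Finset (Set X)) : Finset (Set X) :=
  letI := Classical.decEq (Set X)
  letI := Classical.decEq Γ
  letI : DecidablePred fun A : Set X => A.Nonempty := fun _ => Classical.propDecidable _
  ((Finset.univ : Finset (F → P)).image
    fun c => ⋂ γ : F, (γ : Γ) • ((c γ : Set X))).filter fun A => A.Nonempty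

/-- The entropy `H(Q) = −∑_{A∈Q} μ(A) log μ(A)` of a finite collection `Q` of subsets
(with the convention `0·log 0 = 0`). -/
noncomputable def partitionEntropy {X : Type*} [MeasurableSpace X] (μ : Measure X)
    (Q : Finset (Set X)) : ℝ :=
  -∑ A ∈ Q, (μ A).toReal * Real.log (μ A).toReal

open Set Real

theorem mul_log_le_neg_mul_log {p t : ℝ} (hp : 0 ≤ p) (hp₁ : p ≤ 1) (ht : 0 ≤ t)
    (htp : t * p ≤ 1) : p * log t ≤ -(p * log p) := by
  rcases hp.eq_or_lt with rfl | hp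
  · simp
  rcases ht.eq_or_lt with rfl | ht
  · simpa using mul_log_nonpos hp.le hp₁
  have : log t + log p ≤ 0 := by
    rw [← log_mul ht.ne' hp.ne']
    exact log_nonpos (by positivity) htp
  nlinarith

theorem log_le_partitionEntropy {X : Type*} [MeasurableSpace X] {μ : Measure X}
    [IsProbabilityMeasure μ] {Q : Finset (Set X)} (hQ : ∑ A ∈ Q, μ A = 1) {n : ℕ}
    (hn : ∀ A ∈ Q, n * μ A ≤ 1) : log n ≤ partitionEntropy μ Q := by
  have hsum : ∑ A ∈ Q, (μ A).toReal = 1 := by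
    rw [← ENNReal.toReal_sum fun A _ => measure_ne_top μ A, hQ, ENNReal.toReal_one]
  calc log n = ∑ A ∈ Q, (μ A).toReal * log n := by rw [← Finset.sum_mul, hsum, one_mul]
    _ ≤ ∑ A ∈ Q, -((μ A).toReal * log (μ A).toReal) := by
      refine Finset.sum_le_sum fun A hA => mul_log_le_neg_mul_log ENNReal.toReal_nonneg
        measureReal_le_one n.cast_nonneg ?_
      simpa using ENNReal.toReal_mono ENNReal.one_ne_top (hn A hA)
    _ = partitionEntropy μ Q := by rw [partitionEntropy, Finset.sum_neg_distrib]

theorem ncard_mul_measure_le_measure_univ {G : Type*} [AddGroup G] [MeasurableSpace G]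
    [MeasurableAdd G] (μ : Measure G) [μ.IsAddLeftInvariant] {A E : Set G}
    (hA : MeasurableSet A) (hE : E.Finite) (hd : E.PairwiseDisjoint (· +ᵥ A)) :
    E.ncard * μ A ≤ μ univ := by
  calc E.ncard * μ A = ∑ x ∈ hE.toFinset, μ (x +ᵥ A) := by
        simp [ncard_eq_toFinset_card _ hE]
    _ ≤ μ univ := sum_measure_le_measure_univ
        (fun x _ => (hA.const_vadd x).nullMeasurableSet) (by simpa using hd.aedisjoint)

theorem pairwiseDisjoint_vadd_of_sub_eq_sub {G : Type*} [AddCommGroup G] {A E : Set G}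
    (h : ∀ x ∈ E, ∀ y ∈ E, ∀ u ∈ A, ∀ v ∈ A, x - y = u - v → x = y) :
    E.PairwiseDisjoint (· +ᵥ A) := by
  intro x hx y hy hxy
  refine disjoint_left.2 ?_
  rintro _ ⟨u, hu, rfl⟩ ⟨v, hv, hvu : y + v = x + u⟩
  exact hxy (h x hx y hy v hv u hu (by rw [sub_eq_sub_iff_add_eq_add, ← hvu, add_comm]))

theorem finite_of_forall_subsingleton_inter {X : Type*} {E : Set X} {Q : Finset (Set X)}
    (hQ : ⋃₀ (Q : Set (Set X)) = univ) (h : ∀ A ∈ Q, (E ∩ A).Subsingleton) : E.Finite := by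
  refine (Q.finite_toSet.biUnion fun A hA => (h A hA).finite).subset fun x hx => ?_
  obtain ⟨A, hA, hxA⟩ := sUnion_eq_univ_iff.1 hQ x
  exact mem_biUnion hA ⟨hx, hxA⟩

theorem dist_eq_of_sub_eq_sub {X : Type*} [AddGroup X] [Dist X]
    (hinv : ∀ x y z : X, dist (x + z) (y + z) = dist x y) {a b c d : X} (h : a - b = c - d) :
    dist a b = dist c d := by
  rw [← hinv a b (-b), ← hinv c d (-d), add_neg_cancel, add_neg_cancel, ← sub_eq_add_neg,
    ← sub_eq_add_neg, h]

section refinePartition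

variable {Γ X : Type*} [Group Γ] [AddCommGroup X] [DistribMulAction Γ X] {F : Finset Γ}
  {P : Finset (Set X)} {A : Set X}

theorem mem_refinePartition_iff :
    A ∈ refinePartition F P ↔
      (∃ c : F → P, ⋂ γ : F, (γ : Γ) • (c γ : Set X) = A) ∧ A.Nonempty := by
  simp [refinePartition]

theorem exists_inv_smul_subset_of_mem_refinePartition (hA : A ∈ refinePartition F P)
    {γ : Γ} (hγ : γ ∈ F) : ∃ B ∈ P, γ⁻¹ • A ⊆ B := by
  obtain ⟨⟨c, rfl⟩, -⟩ := mem_refinePartition_iff.1 hA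
  refine ⟨c ⟨γ, hγ⟩, (c _).2, smul_set_subset_iff_subset_inv_smul_set.2 ?_⟩
  simpa using iInter_subset _ (⟨γ, hγ⟩ : F)

theorem pairwiseDisjoint_refinePartition (hP : (P : Set (Set X)).PairwiseDisjoint id) :
    (refinePartition F P : Set (Set X)).PairwiseDisjoint id := by
  intro A hA A' hA' hne
  obtain ⟨⟨c, rfl⟩, -⟩ := mem_refinePartition_iff.1 hA
  obtain ⟨⟨c', rfl⟩, -⟩ := mem_refinePartition_iff.1 hA'
  obtain ⟨γ, hγ⟩ := Function.ne_iff.1 fun h : c = c' => hne (h ▸ rfl)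
  have : Disjoint (c γ : Set X) (c' γ) := hP (c γ).2 (c' γ).2 fun h => hγ (Subtype.ext h)
  exact (disjoint_smul_set.2 this).mono (iInter_subset _ γ) (iInter_subset _ γ)

theorem sUnion_refinePartition (hP : ⋃₀ (P : Set (Set X)) = univ) :
    ⋃₀ (refinePartition F P : Set (Set X)) = univ := by
  refine sUnion_eq_univ_iff.2 fun x => ?_
  choose B hBP hxB using fun γ : F => sUnion_eq_univ_iff.1 hP ((γ : Γ)⁻¹ • x)
  have hx : x ∈ ⋂ γ : F, (γ : Γ) • B γ :=
    mem_iInter.2 fun γ => mem_smul_set_iff_inv_smul_mem.2 (hxB γ)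
  exact ⟨_, mem_refinePartition_iff.2 ⟨⟨fun γ => ⟨B γ, hBP γ⟩, rfl⟩, x, hx⟩, hx⟩

theorem measurableSet_of_mem_refinePartition [MeasurableSpace X]
    (hΓ : ∀ γ : Γ, Measurable fun x : X => γ • x) (hP : ∀ B ∈ P, MeasurableSet B)
    (hA : A ∈ refinePartition F P) : MeasurableSet A := by
  obtain ⟨⟨c, rfl⟩, -⟩ := mem_refinePartition_iff.1 hA
  refine MeasurableSet.iInter fun γ => ?_
  rw [← inv_inv (γ : Γ), ← preimage_smul]
  exact hΓ _ (hP _ (c γ).2)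

theorem sum_measure_refinePartition [MeasurableSpace X] (μ : Measure X)
    (hΓ : ∀ γ : Γ, Measurable fun x : X => γ • x) (hP : ∀ B ∈ P, MeasurableSet B)
    (hPd : (P : Set (Set X)).PairwiseDisjoint id) (hPu : ⋃₀ (P : Set (Set X)) = univ) :
    ∑ A ∈ refinePartition F P, μ A = μ univ := by
  rw [← sUnion_refinePartition (F := F) hPu, sUnion_eq_biUnion, Finset.set_biUnion_coe]
  exact (measure_biUnion_finset (pairwiseDisjoint_refinePartition hPd)
    fun A hA => measurableSet_of_mem_refinePartition hΓ hP hA).symm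

theorem eq_of_sub_eq_sub_of_mem_refinePartition [PseudoMetricSpace X] [BoundedSpace X]
    (hinv : ∀ x y z : X, dist (x + z) (y + z) = dist x y) {δ : ℝ}
    (hdiam : ∀ B ∈ P, Metric.diam B < δ) {E : Set X}
    (hE : ∀ x ∈ E, ∀ y ∈ E, x ≠ y → ∃ γ ∈ F, 2 * δ ≤ dist (γ⁻¹ • x) (γ⁻¹ • y))
    (hA : A ∈ refinePartition F P) :
    ∀ x ∈ E, ∀ y ∈ E, ∀ u ∈ A, ∀ v ∈ A, x - y = u - v → x = y := by
  intro x hx y hy u hu v hv h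
  by_contra hxy
  obtain ⟨γ, hγ, hsep⟩ := hE x hx y hy hxy
  obtain ⟨B, hB, hAB⟩ := exists_inv_smul_subset_of_mem_refinePartition hA hγ
  have hdist : dist (γ⁻¹ • x) (γ⁻¹ • y) ≤ Metric.diam B := by
    rw [dist_eq_of_sub_eq_sub hinv (c := γ⁻¹ • u) (d := γ⁻¹ • v)
      (by rw [← smul_sub, ← smul_sub, h])]
    exact Metric.dist_le_diam_of_mem (Bornology.IsBounded.all B)
      (hAB (smul_mem_smul_set hu)) (hAB (smul_mem_smul_set hv))
  linarith [Metric.diam_nonneg (s := B), hdiam B hB]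

end refinePartition

theorem log_card_separated_le_partitionEntropy_general {Γ X : Type*} [Group Γ]
    [AddCommGroup X] [MetricSpace X] [CompactSpace X] [IsTopologicalAddGroup X]
    [MeasurableSpace X] [BorelSpace X]
    [DistribMulAction Γ X] (hcont : ∀ γ : Γ, Continuous fun x : X => γ • x)
    (hinvariant : ∀ x y z : X, dist (x + z) (y + z) = dist x y)
    (μ : Measure X) [μ.IsAddHaarMeasure] [IsProbabilityMeasure μ]
    (F : Finset Γ) (δ : ℝ)
    (P : Finset (Set X)) (hmeas : ∀ A ∈ P, MeasurableSet A)
    (hdisj : ∀ A ∈ P, ∀ B ∈ P, A ≠ B → A ∩ B = ∅)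
    (hcover : ⋃₀ (P : Set (Set X)) = Set.univ)
    (hdiam : ∀ A ∈ P, Metric.diam A < δ)
    (E : Set X)
    (hE : ∀ x ∈ E, ∀ y ∈ E, x ≠ y → ∃ γ ∈ F, 2 * δ ≤ dist (γ⁻¹ • x) (γ⁻¹ • y)) :
    E.Finite ∧ Real.log (E.ncard) ≤ partitionEntropy μ (refinePartition F P) := by
  have hΓ : ∀ γ : Γ, Measurable fun x : X => γ • x := fun γ => (hcont γ).measurable
  have hPd : (P : Set (Set X)).PairwiseDisjoint id := fun A hA B hB hAB =>
    disjoint_iff_inter_eq_empty.2 (hdisj A hA B hB hAB)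
  have hcell := fun A (hA : A ∈ refinePartition F P) =>
    eq_of_sub_eq_sub_of_mem_refinePartition hinvariant hdiam hE hA
  have hfin : E.Finite := finite_of_forall_subsingleton_inter (sUnion_refinePartition hcover)
    fun A hA x hx y hy => hcell A hA x hx.1 y hy.1 x hx.2 y hy.2 rfl
  refine ⟨hfin, log_le_partitionEntropy ?_ fun A hA => ?_⟩
  · rw [sum_measure_refinePartition μ hΓ hmeas hPd hcover, measure_univ]
  · simpa using ncard_mul_measure_le_measure_univ μ
      (measurableSet_of_mem_refinePartition hΓ hmeas hA) hfin
      (pairwiseDisjoint_vadd_of_sub_eq_sub (hcell A hA))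

/-- **Inequality in the proof of Theorem `t22`**: let `X` be a compact metrizable abelian
topological group with translation-invariant metric `d` and normalized Haar probability
measure `μ`, on which `Γ` acts by continuous group automorphisms.  If `P` is a finite
measurable partition of `X` into sets of diameter `< δ` and `E ⊆ X` is `2δ`-separated for
`d_F(x,y) = max_{γ∈F} d(γ⁻¹x, γ⁻¹y)`, then `log |E| ≤ H(P^F)`. -/
theorem log_card_separated_le_partitionEntropy {Γ X : Type*} [Group Γ]
    [AddCommGroup X] [MetricSpace X] [CompactSpace X] [IsTopologicalAddGroup X]
    [MeasurableSpace X] [BorelSpace X]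
    [DistribMulAction Γ X] (hcont : ∀ γ : Γ, Continuous fun x : X => γ • x)
    (hinvariant : ∀ x y z : X, dist (x + z) (y + z) = dist x y)
    (μ : Measure X) [μ.IsAddHaarMeasure] [IsProbabilityMeasure μ]
    (F : Finset Γ) (δ : ℝ) (hδ : 0 < δ)
    (P : Finset (Set X)) (hmeas : ∀ A ∈ P, MeasurableSet A)
    (hdisj : ∀ A ∈ P, ∀ B ∈ P, A ≠ B → A ∩ B = ∅)
    (hcover : ⋃₀ (P : Set (Set X)) = Set.univ)
    (hdiam : ∀ A ∈ P, Metric.diam A < δ)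
    (E : Set X)
    (hE : ∀ x ∈ E, ∀ y ∈ E, x ≠ y → ∃ γ ∈ F, 2 * δ ≤ dist (γ⁻¹ • x) (γ⁻¹ • y)) :
    E.Finite ∧ Real.log (E.ncard) ≤ partitionEntropy μ (refinePartition F P) :=
  log_card_separated_le_partitionEntropy_general hcont hinvariant μ F δ P hmeas hdisj hcover hdiam E
    hE
end

section
/- Let Γ be a countable discrete group and g ∈ ℂΓ with ‖g‖₁ < 1, so that u = 1 + r(g) is an invertible bounded operator on ℓ²(Γ). Assume that u is positive. Then ⟨(log u) δ_e, δ_e⟩ = Σ_{ν=1}^∞ ((−1)^{ν−1}/ν) · (g^ν)_e, where g^ν denotes the ν-th power of g in the group algebra ℂΓ, (g^ν)_e is its coefficient at the identity e, and the series converges absolutely. -/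
/-!
Since `r(g) = ∑_δ g_δ ρ_δ` with `ρ_δ` the (isometric) right translations, `‖r(g)‖ ≤ ‖g‖₁ < 1`, so
the spectrum of the selfadjoint operator `u = 1 + r(g)` lies in `[1 - ‖g‖₁, 1 + ‖g‖₁] ⊆ (0, 2)`.
There the series `log t = ∑ (-1)^ν/(ν+1) (t - 1)^(ν+1)` converges uniformly, so by continuity of
the functional calculus `log u = ∑ (-1)^ν/(ν+1) r(g)^(ν+1)` in operator norm. Finally
`r(g)^n δ_e = r(g^n) δ_e` has value `(g^n)_e` at `e`.
-/

open Filter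
open scoped ENNReal

/-- The Hilbert space `ℓ²(Γ)` of square-summable complex valued functions on `Γ`. -/
abbrev l2 (Γ : Type*) : Type _ := lp (fun _ : Γ => ℂ) 2

/-- `R` is the operator `r(g)` of right convolution by `g ∈ ℂΓ`:
`(r(g)x)(γ) = ∑_δ a_δ x(γδ)`. -/
def IsRConv {Γ : Type*} [Group Γ] (g : MonoidAlgebra ℂ Γ) (R : l2 Γ →L[ℂ] l2 Γ) : Prop :=
  ∀ (x : l2 Γ) (γ : Γ), R x γ = ∑ δ ∈ g.coeff.support, g.coeff δ * x (γ * δ)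

open scoped Pointwise

section CFCSeries

variable {𝕜 A : Type*} {p : A → Prop} [RCLike 𝕜] [Ring A] [StarRing A] [TopologicalSpace A]
  [Algebra 𝕜 A] [ContinuousFunctionalCalculus 𝕜 A p]

theorem hasSum_cfc_of_norm_le {ι : Type*} {f : ι → 𝕜 → 𝕜} {u : ι → ℝ} {a : A}
    (hu : Summable u) (hfu : ∀ i, ∀ x ∈ spectrum 𝕜 a, ‖f i x‖ ≤ u i)
    (hf : ∀ i, ContinuousOn (f i) (spectrum 𝕜 a)) :
    HasSum (fun i => cfc (f i) a) (cfc (fun x => ∑' i, f i x) a) := by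
  have h := tendsto_cfc_fun (tendstoUniformlyOn_tsum hu hfu)
    (Eventually.of_forall fun s => continuousOn_finsetSum s fun i _ => hf i)
  refine h.congr fun s => ?_
  rw [← Finset.sum_fn, cfc_sum f a s fun i _ => hf i]

end CFCSeries

theorem spectrum.norm_sub_le_norm_sub_algebraMap {𝕜 A : Type*} [NormedField 𝕜] [NormedRing A]
    [NormedAlgebra 𝕜 A] [CompleteSpace A] [NormOneClass A] {a : A} {x : 𝕜}
    (hx : x ∈ spectrum 𝕜 a) (r : 𝕜) : ‖x - r‖ ≤ ‖a - algebraMap 𝕜 A r‖ := by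
  have h : x - r ∈ spectrum 𝕜 a - {r} := Set.sub_mem_sub hx rfl
  rw [spectrum.sub_singleton_eq] at h
  exact spectrum.norm_le_norm_of_mem h

theorem Real.hasSum_log_of_abs_sub_one_lt {x : ℝ} (hx : |x - 1| < 1) :
    HasSum (fun n : ℕ => (-1) ^ n / (n + 1) * (x - 1) ^ (n + 1)) (Real.log x) := by
  have h := (Real.hasSum_pow_div_log_of_abs_lt_one (x := 1 - x) (by rwa [abs_sub_comm])).neg
  rw [neg_neg, sub_sub_cancel] at h
  refine h.congr_fun fun n => ?_
  rw [show 1 - x = -1 * (x - 1) by ring, mul_pow, pow_succ]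
  ring

theorem hasSum_cfc_log {A : Type*} [CStarAlgebra A] {a : A} (ha : IsSelfAdjoint a)
    (h : ‖a - 1‖ < 1) :
    HasSum (fun n : ℕ => ((-1 : ℝ) ^ n / (n + 1)) • (a - 1) ^ (n + 1)) (cfc Real.log a) := by
  have hspec : ∀ x ∈ spectrum ℝ a, |x - 1| ≤ ‖a - 1‖ := fun x hx => by
    rcases subsingleton_or_nontrivial A with hA | hA
    · simp [spectrum.of_subsingleton] at hx
    · simpa using spectrum.norm_sub_le_norm_sub_algebraMap hx 1
  have hsum := hasSum_cfc_of_norm_le (a := a) (u := fun n => ‖a - 1‖ ^ (n + 1))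
    (f := fun (n : ℕ) (x : ℝ) => (-1) ^ n / (n + 1) * (x - 1) ^ (n + 1))
    ((summable_geometric_of_lt_one (norm_nonneg _) h).mul_left _ |>.congr fun n => by ring)
    (fun n x hx => by
      calc ‖(-1) ^ n / (n + 1) * (x - 1) ^ (n + 1)‖ = |x - 1| ^ (n + 1) / (n + 1) := by
            rw [Real.norm_eq_abs, abs_mul, abs_div, abs_pow, abs_neg, abs_one, one_pow, abs_pow,
              abs_of_pos (by positivity : (0 : ℝ) < n + 1)]
            ring
        _ ≤ |x - 1| ^ (n + 1) := div_le_self (by positivity) (by simp)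
        _ ≤ ‖a - 1‖ ^ (n + 1) := pow_le_pow_left₀ (abs_nonneg _) (hspec x hx) _)
    (fun n => by fun_prop)
  rw [cfc_congr fun x hx =>
    (Real.hasSum_log_of_abs_sub_one_lt ((hspec x hx).trans_lt h)).tsum_eq] at hsum
  convert hsum using 2 with n
  rw [cfc_const_mul _ _ a, cfc_pow (fun x : ℝ => x - 1) (n + 1) a,
    cfc_sub (fun x : ℝ => x) (fun _ => 1) a, cfc_id' ℝ a, cfc_const_one ℝ a]

namespace MonoidAlgebra

variable {Γ : Type*} [Group Γ]

theorem norm_coeff_pow_le (g : MonoidAlgebra ℂ Γ) (n : ℕ) (γ : Γ) :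
    ‖(g ^ n).coeff γ‖ ≤ (∑ δ ∈ g.coeff.support, ‖g.coeff δ‖) ^ n := by
  induction n generalizing γ with
  | zero =>
    classical
    rw [pow_zero, pow_zero, one_def, coeff_single, Finsupp.single_apply]
    split_ifs <;> simp
  | succ n ih =>
    rw [pow_succ', coeff_mul_apply_left, Finsupp.sum, pow_succ', Finset.sum_mul]
    refine (norm_sum_le _ _).trans (Finset.sum_le_sum fun δ _ => ?_)
    rw [norm_mul]
    exact mul_le_mul_of_nonneg_left (ih _) (norm_nonneg _)

theorem summable_norm_logSeries_coeff (g : MonoidAlgebra ℂ Γ)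
    (hg : ∑ δ ∈ g.coeff.support, ‖g.coeff δ‖ < 1) (γ : Γ) :
    Summable fun ν : ℕ => ‖(-1 : ℂ) ^ ν / (ν + 1) * (g ^ (ν + 1)).coeff γ‖ := by
  set r := ∑ δ ∈ g.coeff.support, ‖g.coeff δ‖
  refine .of_nonneg_of_le (fun _ => norm_nonneg _) (fun ν => ?_)
    ((summable_geometric_of_lt_one (by positivity) hg).mul_left r)
  have hc : ‖(-1 : ℂ) ^ ν / (ν + 1)‖ ≤ 1 := by
    rw [norm_div, norm_pow, norm_neg, norm_one, one_pow]
    exact div_le_one_of_le₀ (by norm_cast; simp) (norm_nonneg _)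
  rw [norm_mul, ← pow_succ']
  exact (mul_le_of_le_one_left (norm_nonneg _) hc).trans (g.norm_coeff_pow_le _ γ)

end MonoidAlgebra

namespace l2

variable {Γ : Type*} [Group Γ]

def rightTranslate (δ : Γ) (x : l2 Γ) : l2 Γ :=
  ⟨fun γ => x (γ * δ), memℓp_gen <|
    (Equiv.mulRight δ).summable_iff.mpr ((lp.memℓp x).summable (by norm_num))⟩

@[simp]
theorem norm_rightTranslate (δ : Γ) (x : l2 Γ) : ‖rightTranslate δ x‖ = ‖x‖ := by
  have hp : 0 < (2 : ENNReal).toReal := by norm_num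
  rw [lp.norm_eq_tsum_rpow hp, lp.norm_eq_tsum_rpow hp]
  exact congrArg (· ^ _) ((Equiv.mulRight δ).tsum_eq fun γ => ‖x γ‖ ^ (2 : ENNReal).toReal)

end l2

namespace IsRConv

variable {Γ : Type*} [Group Γ] {g : MonoidAlgebra ℂ Γ} {R : l2 Γ →L[ℂ] l2 Γ}

theorem apply_eq_sum (hR : IsRConv g R) (x : l2 Γ) :
    R x = ∑ δ ∈ g.coeff.support, g.coeff δ • l2.rightTranslate δ x := by
  ext γ
  rw [hR x γ, lp.coeFn_sum, Finset.sum_apply]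
  rfl

theorem norm_le (hR : IsRConv g R) : ‖R‖ ≤ ∑ δ ∈ g.coeff.support, ‖g.coeff δ‖ := by
  refine R.opNorm_le_bound (Finset.sum_nonneg fun _ _ => norm_nonneg _) fun x => ?_
  rw [hR.apply_eq_sum, Finset.sum_mul]
  refine (norm_sum_le _ _).trans_eq (Finset.sum_congr rfl fun δ _ => ?_)
  rw [norm_smul, l2.norm_rightTranslate]

theorem pow_apply_single [DecidableEq Γ] (hR : IsRConv g R) (n : ℕ) (γ : Γ) :
    (R ^ n) (lp.single 2 1 1) γ = (g ^ n).coeff γ⁻¹ := by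
  induction n generalizing γ with
  | zero =>
    simp [lp.single_apply, MonoidAlgebra.one_def, Finsupp.single_apply, Pi.single_apply, eq_comm]
  | succ n ih =>
    rw [pow_succ', mul_apply_eq_comp, hR, pow_succ', MonoidAlgebra.coeff_mul_apply_left,
      Finsupp.sum]
    refine Finset.sum_congr rfl fun δ _ => ?_
    rw [ih, mul_inv_rev]

end IsRConv

theorem trace_log_eq_tsum_of_l1_norm_lt_one_general {Γ : Type*} [Group Γ]
    [DecidableEq Γ]
    (g : MonoidAlgebra ℂ Γ) (hg : ∑ δ ∈ g.coeff.support, ‖g.coeff δ‖ < 1)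
    (R : l2 Γ →L[ℂ] l2 Γ) (hR : IsRConv g R)
    (hsa : IsSelfAdjoint (1 + R)) :
    Summable (fun ν : ℕ => ‖((-1 : ℂ) ^ ν / ((ν : ℂ) + 1)) * (g ^ (ν + 1)).coeff 1‖) ∧
    (cfc (instCFC := IsSelfAdjoint.instContinuousFunctionalCalculus) Real.log (1 + R)) (lp.single 2 (1:Γ) 1) (1:Γ)
      = ∑' ν : ℕ, ((-1 : ℂ) ^ ν / ((ν : ℂ) + 1)) * (g ^ (ν + 1)).coeff 1 := by
  have hlog := hasSum_cfc_log hsa (by simpa using hR.norm_le.trans_lt hg)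
  simp only [add_sub_cancel_left] at hlog
  have hcoeff := ((lp.evalCLM ℂ (fun _ : Γ => ℂ) 2 1).comp
      (ContinuousLinearMap.apply ℂ (l2 Γ) (lp.single 2 1 1))).hasSum hlog
  refine ⟨g.summable_norm_logSeries_coeff hg 1, (hcoeff.congr_fun fun ν => ?_).tsum_eq.symm⟩
  show _ = ((((-1 : ℝ) ^ ν / (ν + 1)) • R ^ (ν + 1)) (lp.single 2 1 1) 1 : ℂ)
  rw [FunLike.coe_smul, Pi.smul_apply, lp.coeFn_smul, Pi.smul_apply, hR.pow_apply_single, inv_one,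
    Complex.real_smul]
  push_cast
  ring

/-- **Formula (9) of the paper**: for `g ∈ ℂΓ` with `‖g‖₁ < 1` and `u = 1 + r(g)`
positive, `log det_{NΓ} u = tr_{NΓ} (log u) = ∑_{ν≥1} ((−1)^{ν−1}/ν)·(g^ν)_e`, the series
converging absolutely.  (Here `⟨(log u) δ_e, δ_e⟩ = ((log u) δ_e)(e)`.) -/
theorem trace_log_eq_tsum_of_l1_norm_lt_one {Γ : Type*} [Group Γ] [Countable Γ]
    [DecidableEq Γ]
    (g : MonoidAlgebra ℂ Γ) (hg : ∑ δ ∈ g.coeff.support, ‖g.coeff δ‖ < 1)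
    (R : l2 Γ →L[ℂ] l2 Γ) (hR : IsRConv g R)
    (hsa : IsSelfAdjoint (1 + R))
    (hspec : spectrum ℂ (1 + R) ⊆ {z : ℂ | 0 ≤ z.re ∧ z.im = 0}) :
    Summable (fun ν : ℕ => ‖((-1 : ℂ) ^ ν / ((ν : ℂ) + 1)) * (g ^ (ν + 1)).coeff 1‖) ∧
    (cfc (instCFC := IsSelfAdjoint.instContinuousFunctionalCalculus) Real.log (1 + R)) (lp.single 2 (1:Γ) 1) (1:Γ)
      = ∑' ν : ℕ, ((-1 : ℂ) ^ ν / ((ν : ℂ) + 1)) * (g ^ (ν + 1)).coeff 1 :=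
  trace_log_eq_tsum_of_l1_norm_lt_one_general g hg R hR hsa
end

section
/- Let Γ be a finitely generated countable discrete group and let f ∈ ℤΓ be a unit in L¹(Γ). Set ε = 1/(3‖f‖₁). Then every x ∈ X_f with ϑ(x(γ), 0) < ε for all γ ∈ Γ equals 0; consequently, for all x ≠ y in X_f there exists γ ∈ Γ with ϑ(x(γ), y(γ)) ≥ ε, i.e. the Γ-action on X_f is expansive. -/
/-!
Lift a point `x ∈ X_f` whose coordinates are all `ε`-close to `0` to `t : Γ → ℝ` with `|t| ≤ ε`.
Each defining relation `∑_δ a_δ t(γδ)` is then an integer of absolute value at most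
`‖f‖₁ ε < 1`, so it vanishes in `ℝ`: right convolution with `f` kills the bounded function `t`.
Convolving with the `L¹`-inverse `g` gives `t = (g ⋆ f) ⋆ t = g ⋆ (f ⋆ t) = 0`.
Expansiveness follows by applying this to `x - y`.
-/

open Filter
open scoped ENNReal

/-- `f ∈ ℤΓ` is a unit in the convolution algebra `L¹(Γ)`: there is a summable
`g : Γ → ℂ` with `f⋆g = g⋆f = δ_e`. -/
def IsL1Unit {Γ : Type*} [Group Γ] [DecidableEq Γ] (f : Γ →₀ ℤ) : Prop :=
  ∃ g : Γ → ℂ, Summable (fun γ => ‖g γ‖) ∧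
    (∀ γ : Γ, (∑' α : Γ, (f α : ℂ) * g (α⁻¹ * γ)) = if γ = 1 then 1 else 0) ∧
    (∀ γ : Γ, (∑' α : Γ, g α * (f (α⁻¹ * γ) : ℂ)) = if γ = 1 then 1 else 0)

/-- The `ℓ¹`-norm `‖f‖₁ = ∑_δ |a_δ|` of `f = ∑_δ a_δ δ ∈ ℤΓ`. -/
def l1normZ {Γ : Type*} (f : Γ →₀ ℤ) : ℝ :=
  ∑ δ ∈ f.support, |(f δ : ℝ)|

/-- The subshift `X_f ⊆ (ℝ/ℤ)^Γ` dual to `ℤΓ/ℤΓf`. -/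
def Xf {Γ : Type*} [Group Γ] (f : Γ →₀ ℤ) : Set (Γ → AddCircle (1:ℝ)) :=
  {x | ∀ γ : Γ, ∑ δ ∈ f.support, f δ • x (γ * δ) = 0}

namespace AddCircle

lemma exists_coe_eq_and_abs_eq_norm {p : ℝ} (z : AddCircle p) :
    ∃ r : ℝ, (r : AddCircle p) = z ∧ |r| = ‖z‖ := by
  obtain ⟨x, rfl⟩ := QuotientAddGroup.mk_surjective z
  refine ⟨x - round (p⁻¹ * x) * p, ?_, (norm_eq (p := p)).symm⟩
  rw [coe_sub, ← zsmul_eq_mul, coe_zsmul, coe_period, smul_zero, sub_zero]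

lemma eq_zero_of_coe_eq_zero_of_abs_lt {p r : ℝ} (h : (r : AddCircle p) = 0) (hr : |r| < |p|) :
    r = 0 := by
  obtain ⟨n, rfl⟩ := (coe_eq_zero_iff p).mp h
  have hn : |(n : ℝ)| < 1 := by
    rw [zsmul_eq_mul, abs_mul] at hr
    exact (mul_lt_iff_lt_one_left (abs_pos.mpr fun hp => by simp [hp] at hr)).mp hr
  rw [← Int.cast_abs, ← Int.cast_one, Int.cast_lt, Int.abs_lt_one_iff] at hn
  simp [hn]

end AddCircle

lemma summable_mul_of_summable_norm_of_bounded {ι R : Type*} [NormedRing R] [CompleteSpace R]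
    {g u : ι → R} {C : ℝ} (hg : Summable fun i => ‖g i‖) (hu : ∀ i, ‖u i‖ ≤ C) :
    Summable fun i => g i * u i :=
  Summable.of_norm_bounded (hg.mul_right C) fun i =>
    (norm_mul_le _ _).trans (mul_le_mul_of_nonneg_left (hu i) (norm_nonneg _))

section

variable {Γ : Type*} [Group Γ]

lemma tsum_mul_apply_inv_mul (g : Γ → ℂ) (f : Γ →₀ ℤ) (β : Γ) :
    ∑' α, g α * f (α⁻¹ * β) = ∑ δ ∈ f.support, g (β * δ⁻¹) * f δ := by
  rw [← ((Equiv.inv Γ).trans (Equiv.mulLeft β)).tsum_eq fun α => g α * f (α⁻¹ * β)]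
  simp only [Equiv.trans_apply, Equiv.inv_apply, Equiv.coe_mulLeft, mul_inv_rev, inv_inv,
    inv_mul_cancel_right]
  exact tsum_eq_sum fun δ hδ => by simp [Finsupp.notMem_support_iff.mp hδ]

/-- `g ⋆ (f ⋆ u) = (g ⋆ f) ⋆ u` for `g ∈ ℓ¹` and `u ∈ ℓ^∞`, written out as sums. -/
lemma tsum_mul_sum_eq_tsum_conv_mul {g u : Γ → ℂ} {C : ℝ} (hg : Summable fun α => ‖g α‖)
    (hu : ∀ γ, ‖u γ‖ ≤ C) (f : Γ →₀ ℤ) (γ : Γ) :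
    ∑' α, g α * ∑ δ ∈ f.support, f δ * u (γ * α * δ) =
      ∑' β, (∑' α, g α * f (α⁻¹ * β)) * u (γ * β) := by
  have hsummable (δ : Γ) : Summable fun α => g α * (f δ * u (γ * α * δ)) :=
    summable_mul_of_summable_norm_of_bounded hg fun α =>
      (norm_mul_le _ _).trans (mul_le_mul_of_nonneg_left (hu _) (norm_nonneg _))
  have hreindex (δ : Γ) : ∑' α, g α * (f δ * u (γ * α * δ)) =
      ∑' β, g (β * δ⁻¹) * f δ * u (γ * β) := by
    rw [← (Equiv.mulRight δ).tsum_eq fun β => g (β * δ⁻¹) * f δ * u (γ * β)]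
    simp [mul_assoc]
  calc ∑' α, g α * ∑ δ ∈ f.support, f δ * u (γ * α * δ)
      = ∑ δ ∈ f.support, ∑' α, g α * (f δ * u (γ * α * δ)) := by
        simp_rw [Finset.mul_sum]
        exact Summable.tsum_finsetSum fun δ _ => hsummable δ
    _ = ∑ δ ∈ f.support, ∑' β, g (β * δ⁻¹) * f δ * u (γ * β) :=
        Finset.sum_congr rfl fun δ _ => hreindex δ
    _ = ∑' β, ∑ δ ∈ f.support, g (β * δ⁻¹) * f δ * u (γ * β) := by
        refine (Summable.tsum_finsetSum fun δ _ => ?_).symm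
        refine (Equiv.mulRight δ).summable_iff.mp ?_
        simpa [Function.comp_def, mul_assoc] using hsummable δ
    _ = ∑' β, (∑' α, g α * f (α⁻¹ * β)) * u (γ * β) := by
        simp_rw [tsum_mul_apply_inv_mul, Finset.sum_mul]

lemma IsL1Unit.eq_zero_of_sum_mul_eq_zero [DecidableEq Γ] {f : Γ →₀ ℤ} (hf : IsL1Unit f)
    {u : Γ → ℂ} {C : ℝ} (hu : ∀ γ, ‖u γ‖ ≤ C)
    (hfu : ∀ γ, ∑ δ ∈ f.support, f δ * u (γ * δ) = 0) : u = 0 := by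
  obtain ⟨g, hg, -, hgf⟩ := hf
  funext γ
  calc u γ = ∑' β, (if β = 1 then 1 else 0) * u (γ * β) := by
        rw [tsum_eq_single 1 fun β hβ => by simp [hβ]]
        simp
    _ = ∑' β, (∑' α, g α * f (α⁻¹ * β)) * u (γ * β) := by simp_rw [hgf]
    _ = ∑' α, g α * ∑ δ ∈ f.support, f δ * u (γ * α * δ) :=
        (tsum_mul_sum_eq_tsum_conv_mul hg hu f γ).symm
    _ = 0 := by simp [hfu]

lemma sum_mul_eq_zero_of_coe_mem_Xf {f : Γ →₀ ℤ} {t : Γ → ℝ} {ε : ℝ}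
    (ht : (fun γ => (t γ : AddCircle (1:ℝ))) ∈ Xf f) (htε : ∀ γ, |t γ| ≤ ε)
    (hε : l1normZ f * ε < 1) (γ : Γ) :
    ∑ δ ∈ f.support, (f δ : ℝ) * t (γ * δ) = 0 := by
  refine AddCircle.eq_zero_of_coe_eq_zero_of_abs_lt (p := 1) ?_ ?_
  · simpa [QuotientAddGroup.mk_sum, ← zsmul_eq_mul] using ht γ
  · calc |∑ δ ∈ f.support, (f δ : ℝ) * t (γ * δ)|
        ≤ ∑ δ ∈ f.support, |(f δ : ℝ)| * ε := by
          refine (Finset.abs_sum_le_sum_abs _ _).trans (Finset.sum_le_sum fun δ _ => ?_)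
          rw [abs_mul]
          exact mul_le_mul_of_nonneg_left (htε _) (abs_nonneg _)
      _ = l1normZ f * ε := by rw [l1normZ, Finset.sum_mul]
      _ < |1| := by rwa [abs_one]

lemma sub_mem_Xf {f : Γ →₀ ℤ} {x y : Γ → AddCircle (1:ℝ)} (hx : x ∈ Xf f) (hy : y ∈ Xf f) :
    x - y ∈ Xf f := fun γ => by
  simp only [Pi.sub_apply, smul_sub, Finset.sum_sub_distrib, hx γ, hy γ, sub_zero]

end

theorem Xf_expansive_of_l1_unit_general {Γ : Type*} [Group Γ] [DecidableEq Γ]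
    (f : Γ →₀ ℤ) (hf : IsL1Unit f) :
    (∀ x ∈ Xf f, (∀ γ : Γ, ‖x γ‖ < 1 / (3 * l1normZ f)) → x = 0) ∧
    (∀ x ∈ Xf f, ∀ y ∈ Xf f, x ≠ y → ∃ γ : Γ, 1 / (3 * l1normZ f) ≤ ‖x γ - y γ‖) := by
  set ε : ℝ := 1 / (3 * l1normZ f)
  have hε : l1normZ f * ε < 1 := by
    rcases eq_or_ne (l1normZ f) 0 with h | h
    · simp [h]
    · simp only [ε]; field_simp; norm_num
  have small_eq_zero : ∀ x ∈ Xf f, (∀ γ, ‖x γ‖ < ε) → x = 0 := by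
    intro x hx hsmall
    choose t ht_coe ht_abs using fun γ => AddCircle.exists_coe_eq_and_abs_eq_norm (x γ)
    have htε (γ : Γ) : |t γ| ≤ ε := (ht_abs γ).trans_le (hsmall γ).le
    have hsum := sum_mul_eq_zero_of_coe_mem_Xf (by simpa only [ht_coe]) htε hε
    have ht : (fun γ => (t γ : ℂ)) = 0 :=
      hf.eq_zero_of_sum_mul_eq_zero (by simpa using htε) fun γ => by exact_mod_cast hsum γ
    funext γ
    rw [← ht_coe γ, show t γ = 0 by simpa using congrFun ht γ]
    rfl
  refine ⟨small_eq_zero, fun x hx y hy hne => ?_⟩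
  by_contra! h
  exact hne (sub_eq_zero.mp (small_eq_zero _ (sub_mem_Xf hx hy) h))

/-- **Proposition `t9` of the paper**: if `f ∈ ℤΓ` is a unit in `L¹(Γ)` then, with
`ε = 1/(3‖f‖₁)`, every `x ∈ X_f` with `ϑ(x(γ),0) < ε` for all `γ` vanishes; hence any two
distinct points of `X_f` are `ε`-separated at some coordinate, i.e. the `Γ`-action on
`X_f` is expansive. -/
theorem Xf_expansive_of_l1_unit {Γ : Type*} [Group Γ] [Countable Γ] [DecidableEq Γ]
    (hfg : Group.FG Γ) (f : Γ →₀ ℤ) (hf : IsL1Unit f) :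
    (∀ x ∈ Xf f, (∀ γ : Γ, ‖x γ‖ < 1 / (3 * l1normZ f)) → x = 0) ∧
    (∀ x ∈ Xf f, ∀ y ∈ Xf f, x ≠ y → ∃ γ : Γ, 1 / (3 * l1normZ f) ≤ ‖x γ - y γ‖) :=
  Xf_expansive_of_l1_unit_general f hf
end

section
/- Let Γ be a group generated by a finite set S with e ∈ S = S⁻¹, and let Sⁿ denote the n-fold product set {s₁⋯s_n : s_i ∈ S}. If for every ε > 0 there exists n(ε) such that |Sⁿ| ≤ exp(ε√n) for all n ≥ n(ε), then liminf_{n→∞} (|S^{n+1}|/|Sⁿ| − 1)·log|Sⁿ| = 0. In particular, this hypothesis holds when Γ has polynomial growth (e.g. Γ finitely generated virtually nilpotent). -/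
/-!
Write `a n = log |Sⁿ|`. If `(|Sⁿ⁺¹|/|Sⁿ| - 1) · a n ≥ c > 0` for all large `n`, then
`log r ≥ 1 - 1/r` turns this into `a (n+1) ≥ a n + c / (a n + c)`, so `(a n + c)²` grows by at
least `2c` per step. Hence `a n ≳ √(2cn)`, which is incompatible with `a n ≤ ε √n` for
`ε² < 2c`. Polynomial growth is subexponential in this sense because `log n = o(√n)`.
-/

open Filter Pointwise Real

lemma Real.div_add_le_log_of_le_sub_one_mul {r a c : ℝ} (hr : 0 < r) (hac : 0 < a + c)
    (h : c ≤ (r - 1) * a) : c / (a + c) ≤ log r := by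
  refine le_trans ?_ (one_sub_inv_le_log_of_pos hr)
  have hdiff : (1 - r⁻¹) * (a + c) - c = ((r - 1) * a - c) / r := by
    field_simp
    ring
  rw [div_le_iff₀ hac, ← sub_nonneg, hdiff]
  exact div_nonneg (sub_nonneg.2 h) hr.le

lemma sq_add_two_mul_le_sq_of_add_div_le {b b' c : ℝ} (hb : 0 < b) (hc : 0 ≤ c)
    (h : b + c / b ≤ b') : b ^ 2 + 2 * c ≤ b' ^ 2 :=
  calc b ^ 2 + 2 * c ≤ b ^ 2 + 2 * c + (c / b) ^ 2 := by nlinarith [sq_nonneg (c / b)]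
    _ = (b + c / b) ^ 2 := by field_simp; ring
    _ ≤ b' ^ 2 := pow_le_pow_left₀ (by positivity) h 2

lemma two_mul_sub_le_sq_of_forall_add_div_le {b : ℕ → ℝ} {c : ℝ} {N : ℕ} (hc : 0 ≤ c)
    (hb : ∀ n ≥ N, 0 < b n) (h : ∀ n ≥ N, b n + c / b n ≤ b (n + 1)) :
    ∀ n ≥ N, 2 * c * ((n : ℝ) - N) ≤ b n ^ 2 := by
  intro n hn
  induction n, hn using Nat.le_induction with
  | base => simp [sq_nonneg]
  | succ n hn ih =>
    have := sq_add_two_mul_le_sq_of_add_div_le (hb n hn) hc (h n hn)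
    push_cast
    linarith

section GrowthSequence

variable {g : ℕ → ℝ}

lemma log_add_div_le_log_succ (hg1 : ∀ n, 1 ≤ g n) {c : ℝ} (hc : 0 < c) {n : ℕ}
    (h : c ≤ (g (n + 1) / g n - 1) * log (g n)) :
    log (g n) + c + c / (log (g n) + c) ≤ log (g (n + 1)) + c := by
  have hpos : ∀ m, 0 < g m := fun m => one_pos.trans_le (hg1 m)
  have hstep := Real.div_add_le_log_of_le_sub_one_mul (div_pos (hpos (n + 1)) (hpos n))
    (by linarith [log_nonneg (hg1 n)]) h
  rw [log_div (hpos (n + 1)).ne' (hpos n).ne'] at hstep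
  linarith

lemma frequently_mul_log_le_of_forall_le_exp (hg1 : ∀ n, 1 ≤ g n)
    (hsub : ∀ ε : ℝ, 0 < ε → ∃ N : ℕ, ∀ n ≥ N, g n ≤ exp (ε * √n)) {c : ℝ} (hc : 0 < c) :
    ∃ᶠ n in atTop, (g (n + 1) / g n - 1) * log (g n) ≤ c := by
  by_contra hcon
  obtain ⟨N, hN⟩ := eventually_atTop.1 (not_frequently.1 hcon)
  have hquad := two_mul_sub_le_sq_of_forall_add_div_le (b := fun n => log (g n) + c) hc.le
    (fun n _ => by linarith [log_nonneg (hg1 n)])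
    (fun n hn => log_add_div_le_log_succ hg1 hc (not_le.1 (hN n hn)).le)
  set ε := √c / 2
  obtain ⟨M, hM⟩ := hsub ε (by positivity)
  obtain ⟨n, hn⟩ := exists_nat_gt (4 * N + 4 * c + M)
  have hnM : M ≤ n := Nat.cast_le.1 (by linarith [N.cast_nonneg (α := ℝ)] : (M : ℝ) ≤ n)
  have hnN : N ≤ n := Nat.cast_le.1 (by linarith [M.cast_nonneg (α := ℝ)] : (N : ℝ) ≤ n)
  have hlower := hquad n hnN
  have hupper : log (g n) ≤ ε * √n :=
    (log_le_iff_le_exp (one_pos.trans_le (hg1 n))).2 (hM n hnM)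
  have hε : (ε * √n) ^ 2 = c / 4 * n := by
    rw [mul_pow, div_pow, sq_sqrt hc.le, sq_sqrt n.cast_nonneg]
    ring
  -- `2c (n - N) ≤ (a + c)² ≤ 2a² + 2c² ≤ c n / 2 + 2c²` fails for `n > 4N + 4c`.
  nlinarith [log_nonneg (hg1 n), pow_le_pow_left₀ (log_nonneg (hg1 n)) hupper 2,
    sq_nonneg (log (g n) - c)]

end GrowthSequence

lemma liminf_eq_zero_of_nonneg_of_frequently_le {α : Type*} {l : Filter α} {f : α → ℝ}
    (h0 : ∀ x, 0 ≤ f x) (h : ∀ c : ℝ, 0 < c → ∃ᶠ x in l, f x ≤ c) : liminf f l = 0 := by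
  have hbdd : IsBoundedUnder (· ≥ ·) l f := isBoundedUnder_of ⟨0, h0⟩
  refine le_antisymm (le_of_forall_pos_le_add fun c hc => ?_) ?_
  · simpa using liminf_le_of_frequently_le (h c hc) hbdd
  · exact le_liminf_of_le (IsCoboundedUnder.of_frequently_le (h 1 one_pos))
      (Eventually.of_forall h0)

theorem liminf_mul_log_eq_zero_of_forall_le_exp {g : ℕ → ℝ} (hg1 : ∀ n, 1 ≤ g n)
    (hg : Monotone g) (hsub : ∀ ε : ℝ, 0 < ε → ∃ N : ℕ, ∀ n ≥ N, g n ≤ exp (ε * √n)) :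
    liminf (fun n => (g (n + 1) / g n - 1) * log (g n)) atTop = 0 := by
  refine liminf_eq_zero_of_nonneg_of_frequently_le (fun n => ?_)
    (fun c hc => frequently_mul_log_le_of_forall_le_exp hg1 hsub hc)
  have hratio : 1 ≤ g (n + 1) / g n :=
    (one_le_div (one_pos.trans_le (hg1 n))).2 (hg n.le_succ)
  exact mul_nonneg (sub_nonneg.2 hratio) (log_nonneg (hg1 n))

lemma forall_le_exp_of_le_mul_rpow {g : ℕ → ℝ} {C D : ℝ} (hC : 0 < C)
    (hpoly : ∀ n : ℕ, 1 ≤ n → g n ≤ C * (n : ℝ) ^ D) :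
    ∀ ε : ℝ, 0 < ε → ∃ N : ℕ, ∀ n ≥ N, g n ≤ exp (ε * √n) := by
  intro ε hε
  have hlog : (fun x : ℝ => log C + D * log x) =o[atTop] (√·) := by
    refine .add ?_ (((isLittleO_log_rpow_atTop one_half_pos).congr_right
      fun x => (sqrt_eq_rpow x).symm).const_mul_left D)
    exact Asymptotics.isLittleO_const_left.2 <| .inr <|
      tendsto_norm_atTop_atTop.comp tendsto_sqrt_atTop
  have hbound := (hlog.comp_tendsto tendsto_natCast_atTop_atTop).bound hε
  obtain ⟨N, hN⟩ := eventually_atTop.1 (hbound.and (eventually_ge_atTop 1))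
  refine ⟨N, fun n hn => ?_⟩
  obtain ⟨hle, hn1⟩ := hN n hn
  have hnpos : (0 : ℝ) < n := by exact_mod_cast hn1
  calc g n ≤ C * (n : ℝ) ^ D := hpoly n hn1
    _ = exp (log C + D * log n) := by
      rw [exp_add, exp_log hC, rpow_def_of_pos hnpos, mul_comm D]
    _ ≤ exp (ε * √n) := by
      simp only [Function.comp_apply, Real.norm_eq_abs, abs_of_nonneg (sqrt_nonneg _)] at hle
      exact exp_le_exp.2 ((le_abs_self _).trans hle)

theorem liminf_eq_zero_of_subexponential_growth_general {Γ : Type*} [Group Γ] [DecidableEq Γ]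
    (S : Finset Γ) (h1 : (1 : Γ) ∈ S) :
    ((∀ ε : ℝ, 0 < ε → ∃ N : ℕ, ∀ n ≥ N, ((S ^ n).card : ℝ) ≤ Real.exp (ε * Real.sqrt n)) →
      liminf (fun n : ℕ =>
        (((S ^ (n + 1)).card : ℝ) / ((S ^ n).card : ℝ) - 1) * Real.log ((S ^ n).card))
        atTop = 0) ∧
    ((∃ C D : ℝ, ∀ n : ℕ, 1 ≤ n → ((S ^ n).card : ℝ) ≤ C * (n : ℝ) ^ D) →
      liminf (fun n : ℕ =>
        (((S ^ (n + 1)).card : ℝ) / ((S ^ n).card : ℝ) - 1) * Real.log ((S ^ n).card))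
        atTop = 0) := by
  have hcard : ∀ n, (1 : ℝ) ≤ (S ^ n).card := fun n => by
    exact_mod_cast Finset.card_pos.2 (Finset.Nonempty.pow ⟨1, h1⟩)
  have hmono : Monotone fun n => ((S ^ n).card : ℝ) := fun m n hmn =>
    Nat.cast_le.2 <| Finset.card_le_card (Finset.pow_subset_pow_right h1 hmn)
  have hsubexp := liminf_mul_log_eq_zero_of_forall_le_exp hcard hmono
  refine ⟨hsubexp, fun ⟨C, D, hpoly⟩ => hsubexp (forall_le_exp_of_le_mul_rpow ?_ hpoly)⟩
  have h1le := (hcard 1).trans (hpoly 1 le_rfl)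
  rw [Nat.cast_one, one_rpow, mul_one] at h1le
  linarith

/-- **Proposition `t11` 2) of the paper**: let `S` be a finite symmetric generating set of
`Γ` containing the identity.  If for every `ε > 0` one has `|S^n| ≤ exp(ε√n)` for all
sufficiently large `n`, then `liminf_n (|S^{n+1}|/|S^n| − 1)·log |S^n| = 0`.  In
particular this holds when `Γ` has polynomial growth (e.g. `Γ` finitely generated
virtually nilpotent). -/
theorem liminf_eq_zero_of_subexponential_growth {Γ : Type*} [Group Γ] [DecidableEq Γ]
    (S : Finset Γ) (h1 : (1 : Γ) ∈ S) (hsymm : S⁻¹ = S)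
    (hgen : Subgroup.closure (S : Set Γ) = ⊤) :
    ((∀ ε : ℝ, 0 < ε → ∃ N : ℕ, ∀ n ≥ N, ((S ^ n).card : ℝ) ≤ Real.exp (ε * Real.sqrt n)) →
      liminf (fun n : ℕ =>
        (((S ^ (n + 1)).card : ℝ) / ((S ^ n).card : ℝ) - 1) * Real.log ((S ^ n).card))
        atTop = 0) ∧
    ((∃ C D : ℝ, ∀ n : ℕ, 1 ≤ n → ((S ^ n).card : ℝ) ≤ C * (n : ℝ) ^ D) →
      liminf (fun n : ℕ =>
        (((S ^ (n + 1)).card : ℝ) / ((S ^ n).card : ℝ) - 1) * Real.log ((S ^ n).card))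
        atTop = 0) :=
  liminf_eq_zero_of_subexponential_growth_general S h1
end
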